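/- arXiv:2605.28517 — 6 statements merged into one kernel-verified Lean document; each statement's English description precedes it below -/
import Mathlib

section
/- If g : ℝ^d → ℝ is nonnegative, differentiable, and α-smooth (its gradient is α-Lipschitz), then for every w ∈ ℝ^d, ‖∇g(w)‖² ≤ 2α · g(w). -/
/-!
Along the line `t ↦ x + t • v`, the `L`-Lipschitz gradient makes
`f (x + t • v) - t ⟪∇f x, v⟫ - (L / 2) t² ‖v‖²` antitone for `t ≥ 0`, which gives the descent
inequality `f (x + v) ≤ f x + ⟪∇f x, v⟫ + (L / 2) ‖v‖²`. Taking the gradient step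
`v = -L⁻¹ • ∇f x` and using `0 ≤ f (x + v)` yields `‖∇f x‖² / (2L) ≤ f x`.
-/

open scoped Gradient InnerProductSpace

variable {E : Type*} [NormedAddCommGroup E] [InnerProductSpace ℝ E] [CompleteSpace E]
  {f : E → ℝ} {L : ℝ}

theorem hasDerivAt_apply_add_smul {x v : E} {t : ℝ} (hf : DifferentiableAt ℝ f (x + t • v)) :
    HasDerivAt (fun s : ℝ => f (x + s • v)) ⟪∇ f (x + t • v), v⟫_ℝ t := by
  have hline : HasDerivAt (fun s : ℝ => x + s • v) v t := by
    simpa using ((hasDerivAt_id t).smul_const v).const_add x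
  simpa [Function.comp_def] using hf.hasGradientAt.hasFDerivAt.comp_hasDerivAt t hline

theorem apply_add_le_of_norm_gradient_sub_le (hf : Differentiable ℝ f)
    (hL : ∀ x y, ‖∇ f x - ∇ f y‖ ≤ L * ‖x - y‖) (x v : E) :
    f (x + v) ≤ f x + ⟪∇ f x, v⟫_ℝ + L / 2 * ‖v‖ ^ 2 := by
  set φ : ℝ → ℝ := fun t => f (x + t • v) - t * ⟪∇ f x, v⟫_ℝ - L / 2 * t ^ 2 * ‖v‖ ^ 2
  set φ' : ℝ → ℝ := fun t => ⟪∇ f (x + t • v), v⟫_ℝ - ⟪∇ f x, v⟫_ℝ - L * t * ‖v‖ ^ 2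
  have hφ' (t : ℝ) : HasDerivAt φ (φ' t) t := by
    have := ((hasDerivAt_apply_add_smul (hf (x + t • v))).fun_sub
      ((hasDerivAt_id t).mul_const ⟪∇ f x, v⟫_ℝ)).fun_sub
      (((hasDerivAt_pow 2 t).const_mul (L / 2)).mul_const (‖v‖ ^ 2))
    refine this.congr_deriv ?_
    simp only [φ', Nat.cast_ofNat, Nat.add_one_sub_one, pow_one]
    ring
  have hφ'_nonpos (t : ℝ) (ht : 0 ≤ t) : φ' t ≤ 0 := by
    have hinner : ⟪∇ f (x + t • v) - ∇ f x, v⟫_ℝ ≤ L * t * ‖v‖ ^ 2 :=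
      calc ⟪∇ f (x + t • v) - ∇ f x, v⟫_ℝ
          ≤ ‖∇ f (x + t • v) - ∇ f x‖ * ‖v‖ := real_inner_le_norm _ _
        _ ≤ L * ‖x + t • v - x‖ * ‖v‖ := by gcongr; exact hL _ _
        _ = L * t * ‖v‖ ^ 2 := by
          rw [add_sub_cancel_left, norm_smul, Real.norm_of_nonneg ht]; ring
    rw [inner_sub_left] at hinner
    simp only [φ']
    linarith
  have hanti : AntitoneOn φ (Set.Ici 0) := by
    refine antitoneOn_of_hasDerivWithinAt_nonpos (convex_Ici 0)
      (fun t _ => (hφ' t).continuousAt.continuousWithinAt)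
      (fun t _ => (hφ' t).hasDerivWithinAt) fun t ht => hφ'_nonpos t (interior_subset ht)
  have h01 : φ 1 ≤ φ 0 := hanti Set.self_mem_Ici (Set.mem_Ici.mpr zero_le_one) zero_le_one
  simp only [φ, zero_smul, one_smul, add_zero] at h01
  linarith

theorem sq_norm_gradient_le_of_nonneg (hL₀ : 0 < L) (hf : Differentiable ℝ f)
    (hnn : ∀ x, 0 ≤ f x) (hL : ∀ x y, ‖∇ f x - ∇ f y‖ ≤ L * ‖x - y‖) (x : E) :
    ‖∇ f x‖ ^ 2 ≤ 2 * L * f x := by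
  have hstep := apply_add_le_of_norm_gradient_sub_le hf hL x (-(L⁻¹ • ∇ f x))
  rw [inner_neg_right, real_inner_smul_right, real_inner_self_eq_norm_sq, norm_neg, norm_smul,
    Real.norm_of_nonneg (inv_nonneg.mpr hL₀.le)] at hstep
  have hdecrease : L⁻¹ * ‖∇ f x‖ ^ 2 - L / 2 * (L⁻¹ * ‖∇ f x‖) ^ 2 = ‖∇ f x‖ ^ 2 / (2 * L) := by
    field_simp
    ring
  have hbound : ‖∇ f x‖ ^ 2 / (2 * L) ≤ f x := by linarith [hnn (x + -(L⁻¹ • ∇ f x))]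
  rwa [div_le_iff₀ (by positivity), mul_comm] at hbound

theorem self_bounding_property (d : ℕ) (α : ℝ) (hα : 0 < α)
    (g : EuclideanSpace ℝ (Fin d) → ℝ)
    (hdiff : Differentiable ℝ g)
    (hnn : ∀ w, 0 ≤ g w)
    (hsmooth : ∀ w w', ‖gradient g w - gradient g w'‖ ≤ α * ‖w - w'‖) :
    ∀ w, ‖gradient g w‖ ^ 2 ≤ 2 * α * g w :=
  sq_norm_gradient_le_of_nonneg hα hdiff hnn hsmooth
end

section
/- If g : ℝ^d → ℝ is convex, differentiable, and α-smooth, then for all w, w' ∈ ℝ^d, ⟨w - w', ∇g(w) - ∇g(w')⟩ ≥ (1/α)‖∇g(w) - ∇g(w')‖². -/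
/-!
Convexity gives the first-order lower bound `g x + ⟪∇g x, y - x⟫ ≤ g y`, and an `α`-Lipschitz
gradient gives the quadratic upper bound `g y ≤ g x + ⟪∇g x, y - x⟫ + α/2 ‖y - x‖²`. Comparing
both at the gradient step `z = y - α⁻¹ (∇g y - ∇g x)` improves the lower bound by
`(2α)⁻¹ ‖∇g y - ∇g x‖²`; adding the improved bound for `(w, w')` and for `(w', w)` gives
co-coercivity.
-/

open Set

variable {F : Type*} [NormedAddCommGroup F] [InnerProductSpace ℝ F] [CompleteSpace F]
  {g : F → ℝ} {g' : F}

theorem HasGradientAt.hasDerivAt_comp_add_smul {x v : F} {t : ℝ}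
    (hg : HasGradientAt g g' (x + t • v)) :
    HasDerivAt (fun s : ℝ => g (x + s • v)) (inner ℝ g' v) t := by
  have hline : HasDerivAt (fun s : ℝ => x + s • v) v t := by
    simpa using ((hasDerivAt_id t).smul_const v).const_add x
  have := hg.hasFDerivAt.comp_hasDerivAt t hline
  rwa [InnerProductSpace.toDual_apply_apply] at this

theorem ConvexOn.add_inner_gradient_le {s : Set F} (hconv : ConvexOn ℝ s g) {x y : F}
    (hx : x ∈ s) (hy : y ∈ s) (hg : HasGradientAt g g' x) : g x + inner ℝ g' (y - x) ≤ g y := by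
  have hline := hconv.comp_affineMap (AffineMap.lineMap x y)
  have hφ : g ∘ AffineMap.lineMap x y = fun t : ℝ => g (x + t • (y - x)) := by
    ext t
    simp [AffineMap.lineMap_apply_module', add_comm]
  rw [hφ] at hline
  have := hline.le_slope_of_hasDerivAt (by simpa using hx) (by simpa using hy) zero_lt_one
    (HasGradientAt.hasDerivAt_comp_add_smul (by simpa using hg))
  simp only [slope_def_field, one_smul, zero_smul, add_zero, add_sub_cancel] at this
  linarith

theorem le_add_inner_gradient_add_sq_of_lipschitz_gradient {α : ℝ}
    (hdiff : Differentiable ℝ g)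
    (hsmooth : ∀ w w', ‖gradient g w - gradient g w'‖ ≤ α * ‖w - w'‖) (x y : F) :
    g y ≤ g x + inner ℝ (gradient g x) (y - x) + α / 2 * ‖y - x‖ ^ 2 := by
  set v := y - x
  have hderiv (t : ℝ) : HasDerivAt (fun s : ℝ => g (x + s • v) - s * inner ℝ (gradient g x) v)
      (inner ℝ (gradient g (x + t • v) - gradient g x) v) t := by
    rw [inner_sub_left]
    exact (hdiff _).hasGradientAt.hasDerivAt_comp_add_smul.sub
      ((hasDerivAt_id t).mul_const _ |>.congr_deriv (one_mul _))
  have hbound (t : ℝ) (ht : 0 ≤ t) :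
      inner ℝ (gradient g (x + t • v) - gradient g x) v ≤ α * t * ‖v‖ ^ 2 := calc
    _ ≤ ‖gradient g (x + t • v) - gradient g x‖ * ‖v‖ := real_inner_le_norm _ _
    _ ≤ α * ‖t • v‖ * ‖v‖ := by
        gcongr
        simpa using hsmooth (x + t • v) x
    _ = α * t * ‖v‖ ^ 2 := by rw [norm_smul, Real.norm_of_nonneg ht]; ring
  have hB (t : ℝ) :
      HasDerivAt (fun s : ℝ => g x + α / 2 * s ^ 2 * ‖v‖ ^ 2) (α * t * ‖v‖ ^ 2) t := by
    have := (((hasDerivAt_pow 2 t).const_mul (α / 2)).mul_const (‖v‖ ^ 2)).const_add (g x)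
    exact this.congr_deriv (by simp only [Nat.cast_ofNat, Nat.add_one_sub_one, pow_one]; ring)
  have := image_le_of_deriv_right_le_deriv_boundary (a := 0) (b := 1)
    (fun t _ => (hderiv t).continuousAt.continuousWithinAt)
    (fun t _ => (hderiv t).hasDerivWithinAt) (by simp)
    (fun t _ => (hB t).continuousAt.continuousWithinAt)
    (fun t _ => (hB t).hasDerivWithinAt) (fun t ht => hbound t ht.1) (right_mem_Icc.2 zero_le_one)
  simp only [one_smul, one_mul, one_pow, mul_one, v, add_sub_cancel] at this
  linarith

theorem ConvexOn.add_inner_gradient_add_sq_norm_sub_le {α : ℝ} (hα : 0 < α)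
    (hconv : ConvexOn ℝ univ g) (hdiff : Differentiable ℝ g)
    (hsmooth : ∀ w w', ‖gradient g w - gradient g w'‖ ≤ α * ‖w - w'‖) (x y : F) :
    g x + inner ℝ (gradient g x) (y - x) + 1 / (2 * α) * ‖gradient g y - gradient g x‖ ^ 2
      ≤ g y := by
  set u := gradient g y - gradient g x
  have hlower := hconv.add_inner_gradient_le (mem_univ x) (mem_univ (y - α⁻¹ • u))
    (hdiff x).hasGradientAt
  have hupper := le_add_inner_gradient_add_sq_of_lipschitz_gradient hdiff hsmooth y (y - α⁻¹ • u)
  rw [sub_right_comm, inner_sub_right, real_inner_smul_right] at hlower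
  rw [sub_sub_cancel_left, inner_neg_right, real_inner_smul_right, norm_neg, norm_smul,
    Real.norm_of_nonneg (inv_nonneg.2 hα.le)] at hupper
  have hu : inner ℝ (gradient g y) u - inner ℝ (gradient g x) u = ‖u‖ ^ 2 := by
    rw [← inner_sub_left, real_inner_self_eq_norm_sq]
  have hα' : α * α⁻¹ = 1 := mul_inv_cancel₀ hα.ne'
  linear_combination hlower + hupper - α⁻¹ * hu + (α⁻¹ * ‖u‖ ^ 2 / 2) * hα'

theorem cocoercivity (d : ℕ) (α : ℝ) (hα : 0 < α)
    (g : EuclideanSpace ℝ (Fin d) → ℝ)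
    (hconv : ConvexOn ℝ Set.univ g)
    (hdiff : Differentiable ℝ g)
    (hsmooth : ∀ w w', ‖gradient g w - gradient g w'‖ ≤ α * ‖w - w'‖) :
    ∀ w w' : EuclideanSpace ℝ (Fin d),
      (1 / α) * ‖gradient g w - gradient g w'‖ ^ 2 ≤
        inner ℝ (w - w') (gradient g w - gradient g w') := by
  intro w w'
  have h₁ := hconv.add_inner_gradient_add_sq_norm_sub_le hα hdiff hsmooth w w'
  have h₂ := hconv.add_inner_gradient_add_sq_norm_sub_le hα hdiff hsmooth w' w
  rw [norm_sub_rev] at h₁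
  have hinner : inner ℝ (w - w') (gradient g w - gradient g w') =
      -(inner ℝ (gradient g w) (w' - w) + inner ℝ (gradient g w') (w - w')) := by
    rw [inner_sub_right, real_inner_comm, real_inner_comm (gradient g w'), ← neg_sub w' w,
      inner_neg_right]
    ring
  rw [hinner]
  linear_combination h₁ + h₂
end

section
/- Let β ∈ [0,1), and let sequences m, m' : ℕ → ℝ^d satisfy m₀ = m'₀ = 0 and m_t = β m_{t-1} + g_t, m'_t = β m'_{t-1} + g'_t for t ≥ 1, where g, g' : ℕ → ℝ^d. Then for any δ > 0 and any t ≥ 1, ‖m_t - m'_t‖² ≤ (1 + 1/δ) · Σ_{k=1}^{t} ((1+δ)β²)^{t-k} ‖g_k - g'_k‖². -/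
lemma young_norm_sq {E : Type*} [SeminormedAddCommGroup E] (δ : ℝ) (hδ : 0 < δ) (a b : E) :
    ‖a + b‖ ^ 2 ≤ (1 + δ) * ‖a‖ ^ 2 + (1 + 1 / δ) * ‖b‖ ^ 2 := by
  have h : ‖a + b‖ ^ 2 ≤ (‖a‖ + ‖b‖) ^ 2 :=
    pow_le_pow_left₀ (norm_nonneg _) (norm_add_le a b) 2
  have hδ' : δ * (1 / δ) = 1 := by field_simp
  nlinarith [sq_nonneg (δ * ‖a‖ - ‖b‖), norm_nonneg a, norm_nonneg b, hδ]

theorem momentum_diff_norm_sq_bound (d : ℕ) (β : ℝ) (hβ0 : 0 ≤ β) (hβ1 : β < 1)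
    (m m' g g' : ℕ → EuclideanSpace ℝ (Fin d))
    (hm0 : m 0 = 0) (hm0' : m' 0 = 0)
    (hm : ∀ t : ℕ, 1 ≤ t → m t = β • m (t - 1) + g t)
    (hm' : ∀ t : ℕ, 1 ≤ t → m' t = β • m' (t - 1) + g' t) :
    ∀ δ : ℝ, 0 < δ → ∀ t : ℕ, 1 ≤ t →
      ‖m t - m' t‖ ^ 2 ≤
        (1 + 1 / δ) * ∑ k ∈ Finset.Icc 1 t,
          ((1 + δ) * β ^ 2) ^ (t - k) * ‖g k - g' k‖ ^ 2 := by
  intro δ hδ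
  have hc : (0:ℝ) ≤ (1 + δ) * β ^ 2 := by positivity
  have h1δ : (1:ℝ) ≤ 1 + 1 / δ := by
    have : 0 < 1 / δ := by positivity
    linarith
  intro t ht
  induction t, ht using Nat.le_induction with
  | base =>
    have h1 : m 1 - m' 1 = g 1 - g' 1 := by
      rw [hm 1 le_rfl, hm' 1 le_rfl]
      simp [hm0, hm0']
    rw [h1]
    simp only [Finset.Icc_self, Finset.sum_singleton, Nat.sub_self, pow_zero, one_mul]
    nlinarith [sq_nonneg ‖g 1 - g' 1‖, norm_nonneg (g 1 - g' 1)]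
  | succ t ht ih =>
    have hstep : m (t+1) - m' (t+1) = β • (m t - m' t) + (g (t+1) - g' (t+1)) := by
      rw [hm (t+1) (by omega), hm' (t+1) (by omega)]
      simp only [Nat.add_sub_cancel, smul_sub]
      abel
    have hy := young_norm_sq δ hδ (β • (m t - m' t)) (g (t+1) - g' (t+1))
    rw [hstep]
    have hsn : ‖β • (m t - m' t)‖ ^ 2 = β ^ 2 * ‖m t - m' t‖ ^ 2 := by
      rw [norm_smul]
      rw [Real.norm_eq_abs, mul_pow, sq_abs]
    rw [hsn] at hy
    have key : (1 + δ) * (β ^ 2 * ‖m t - m' t‖ ^ 2) ≤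
        ((1 + δ) * β ^ 2) * ((1 + 1 / δ) * ∑ k ∈ Finset.Icc 1 t,
          ((1 + δ) * β ^ 2) ^ (t - k) * ‖g k - g' k‖ ^ 2) := by
      have := mul_le_mul_of_nonneg_left ih hc
      linarith [this]
    have hsum : ∑ k ∈ Finset.Icc 1 (t+1), ((1 + δ) * β ^ 2) ^ (t + 1 - k) * ‖g k - g' k‖ ^ 2
        = ((1 + δ) * β ^ 2) * (∑ k ∈ Finset.Icc 1 t, ((1 + δ) * β ^ 2) ^ (t - k) * ‖g k - g' k‖ ^ 2)
          + ‖g (t+1) - g' (t+1)‖ ^ 2 := by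
      rw [Finset.sum_Icc_succ_top (by omega : 1 ≤ t + 1)]
      rw [Nat.sub_self, pow_zero, one_mul, Finset.mul_sum]
      congr 1
      apply Finset.sum_congr rfl
      intro k hk
      simp only [Finset.mem_Icc] at hk
      rw [← mul_assoc, ← pow_succ']
      congr 2
      omega
    rw [hsum, mul_add]
    nlinarith [key, hy]
end

section
/- Let β ∈ [0,1), γ ≥ 0, η > 0, and let g : ℕ → ℝ^d be arbitrary. Define sequences m, w : ℕ → ℝ^d by m₀ = 0, m_t = β m_{t-1} + g_t, and w_{t+1} = w_t - γ g_t - η m_t for t ≥ 1, starting from w₁. Define the auxiliary sequence y by y₁ = w₁ and y_k = (1/(1-β)) w_k - (β/(1-β)) w_{k-1} + (βγ/(1-β)) g_{k-1} for k ≥ 2. Then for all k ≥ 1, y_{k+1} = y_k - (γ + η/(1-β)) g_k. -/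
theorem aux_sequence_sgd_update (d : ℕ) (β γ η : ℝ)
    (hβ0 : 0 ≤ β) (hβ1 : β < 1) (hγ : 0 ≤ γ) (hη : 0 < η)
    (g m w y : ℕ → EuclideanSpace ℝ (Fin d))
    (hm0 : m 0 = 0)
    (hm : ∀ t : ℕ, 1 ≤ t → m t = β • m (t - 1) + g t)
    (hw : ∀ t : ℕ, 1 ≤ t → w (t + 1) = w t - γ • g t - η • m t)
    (hy1 : y 1 = w 1)
    (hy : ∀ k : ℕ, 2 ≤ k →
      y k = (1 / (1 - β)) • w k - (β / (1 - β)) • w (k - 1)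
            + (β * γ / (1 - β)) • g (k - 1)) :
    ∀ k : ℕ, 1 ≤ k → y (k + 1) = y k - (γ + η / (1 - β)) • g k := by
  have hne : (1 : ℝ) - β ≠ 0 := by linarith
  intro k hk
  rcases Nat.exists_eq_add_of_le hk with ⟨j, rfl⟩
  rcases j with _ | j
  · -- k = 1
    have h2 : y 2 = (1 / (1 - β)) • w 2 - (β / (1 - β)) • w 1
        + (β * γ / (1 - β)) • g 1 := by simpa using hy 2 (by norm_num)
    have hw1 : w 2 = w 1 - γ • g 1 - η • m 1 := hw 1 (by norm_num)
    have hm1 : m 1 = g 1 := by simpa [hm0] using hm 1 (by norm_num)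
    rw [show (1 : ℕ) + 0 + 1 = 2 by norm_num, show (1 : ℕ) + 0 = 1 by norm_num,
      h2, hw1, hm1, hy1]
    match_scalars <;> field_simp <;> ring
  · -- k = j + 2
    have e1 : 1 + (j + 1) = j + 2 := by ring
    rw [e1]
    have hyk : y (j + 2) = (1 / (1 - β)) • w (j + 2) - (β / (1 - β)) • w (j + 1)
        + (β * γ / (1 - β)) • g (j + 1) := by
      simpa using hy (j + 2) (by omega)
    have hyk1 : y (j + 3) = (1 / (1 - β)) • w (j + 3) - (β / (1 - β)) • w (j + 2)
        + (β * γ / (1 - β)) • g (j + 2) := by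
      simpa [show j + 3 - 1 = j + 2 by omega] using hy (j + 3) (by omega)
    have hwk : w (j + 3) = w (j + 2) - γ • g (j + 2) - η • m (j + 2) := by
      simpa [show j + 2 + 1 = j + 3 by omega] using hw (j + 2) (by omega)
    have hwk0 : w (j + 2) = w (j + 1) - γ • g (j + 1) - η • m (j + 1) := by
      simpa using hw (j + 1) (by omega)
    have hmk : m (j + 2) = β • m (j + 1) + g (j + 2) := by
      simpa using hm (j + 2) (by omega)
    rw [show j + 2 + 1 = j + 3 by omega, hyk1, hyk, hwk, hwk0, hmk]
    match_scalars <;> field_simp <;> ring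
end

section
/- Let β ∈ [0,1), γ ≥ 0, η > 0, and g : ℕ → ℝ^d. With m₀ = 0, m_t = β m_{t-1} + g_t, w_{t+1} = w_t - γ g_t - η m_t, and y defined by y₁ = w₁, y_k = (1/(1-β)) w_k - (β/(1-β)) w_{k-1} + (βγ/(1-β)) g_{k-1} for k ≥ 2, we have for all k ≥ 1: ‖y_k - w_k‖² ≤ (β²η²/(1-β)³) Σ_{j=1}^{k-1} β^{k-1-j} ‖g_j‖². -/
/-!
The auxiliary sequence differs from the iterate by a fixed multiple of the previous momentum,
`y k - w k = -(β η / (1 - β)) • m (k - 1)`. Unrolling the momentum into the weighted sum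
`∑ β ^ (k - 1 - j) • g j`, Cauchy–Schwarz with the weights `β ^ (k - 1 - j)` and the bound
`1 / (1 - β)` on their total give the estimate.
-/

open Finset

theorem momentum_eq_sum {R E : Type*} [CommSemiring R] [AddCommMonoid E] [Module R E]
    (β : R) (g m : ℕ → E) (hm0 : m 0 = 0) (hm : ∀ t : ℕ, 1 ≤ t → m t = β • m (t - 1) + g t)
    (t : ℕ) : m t = ∑ j ∈ Icc 1 t, β ^ (t - j) • g j := by
  induction t with
  | zero => simp [hm0]
  | succ n ih =>
    have hsucc : ∀ j ∈ Icc 1 n, β • β ^ (n - j) • g j = β ^ (n + 1 - j) • g j := by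
      intro j hj
      rw [smul_smul, ← pow_succ', Nat.sub_add_comm (mem_Icc.mp hj).2]
    rw [hm (n + 1) (Nat.le_add_left 1 n), Nat.add_sub_cancel, ih, smul_sum, sum_congr rfl hsucc,
      sum_Icc_succ_top (Nat.le_add_left 1 n), Nat.sub_self, pow_zero, one_smul]

theorem geom_sum_Icc_reflect_le {β : ℝ} (hβ0 : 0 ≤ β) (hβ1 : β < 1) (n : ℕ) :
    ∑ j ∈ Icc 1 n, β ^ (n - j) ≤ 1 / (1 - β) := by
  rw [← Ico_add_one_right_eq_Icc, sum_Ico_reflect (β ^ ·) 1 le_rfl, Nat.sub_self,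
    Nat.add_sub_cancel]
  simpa using geom_sum_Ico_le_of_lt_one (m := 0) (n := n) hβ0 hβ1

theorem norm_sum_smul_sq_le {ι E : Type*} [SeminormedAddCommGroup E] [NormedSpace ℝ E]
    (s : Finset ι) {c : ι → ℝ} (hc : ∀ i ∈ s, 0 ≤ c i) (v : ι → E) :
    ‖∑ i ∈ s, c i • v i‖ ^ 2 ≤ (∑ i ∈ s, c i) * ∑ i ∈ s, c i * ‖v i‖ ^ 2 := by
  have hnorm : ‖∑ i ∈ s, c i • v i‖ ≤ ∑ i ∈ s, c i * ‖v i‖ :=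
    (norm_sum_le _ _).trans_eq <| sum_congr rfl fun i hi => by
      rw [norm_smul, Real.norm_of_nonneg (hc i hi)]
  calc ‖∑ i ∈ s, c i • v i‖ ^ 2 ≤ (∑ i ∈ s, c i * ‖v i‖) ^ 2 := by gcongr
    _ ≤ _ := sum_sq_le_sum_mul_sum_of_sq_le_mul s hc
        (fun i hi => mul_nonneg (hc i hi) (sq_nonneg _)) fun i _ => by rw [mul_pow]; nlinarith

theorem aux_sub_iterate_eq_neg_smul_momentum {E : Type*} [AddCommGroup E] [Module ℝ E]
    {β γ η : ℝ} (hβ : β ≠ 1) (g m w y : ℕ → E) (hm0 : m 0 = 0)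
    (hw : ∀ t : ℕ, 1 ≤ t → w (t + 1) = w t - γ • g t - η • m t) (hy1 : y 1 = w 1)
    (hy : ∀ k : ℕ, 2 ≤ k →
      y k = (1 / (1 - β)) • w k - (β / (1 - β)) • w (k - 1) + (β * γ / (1 - β)) • g (k - 1))
    {k : ℕ} (hk : 1 ≤ k) : y k - w k = -((β * η / (1 - β)) • m (k - 1)) := by
  obtain ⟨t, rfl⟩ := Nat.exists_eq_add_of_le' hk
  rcases Nat.eq_zero_or_pos t with rfl | ht
  · simp [hy1, hm0]
  have : (1 : ℝ) - β ≠ 0 := sub_ne_zero.mpr hβ.symm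
  rw [hy (t + 1) (by omega), Nat.add_sub_cancel, hw t ht]
  match_scalars <;> field_simp <;> ring

theorem aux_dist_bound_general (d : ℕ) (β γ η : ℝ)
    (hβ0 : 0 ≤ β) (hβ1 : β < 1)
    (g m w y : ℕ → EuclideanSpace ℝ (Fin d))
    (hm0 : m 0 = 0)
    (hm : ∀ t : ℕ, 1 ≤ t → m t = β • m (t - 1) + g t)
    (hw : ∀ t : ℕ, 1 ≤ t → w (t + 1) = w t - γ • g t - η • m t)
    (hy1 : y 1 = w 1)
    (hy : ∀ k : ℕ, 2 ≤ k →
      y k = (1 / (1 - β)) • w k - (β / (1 - β)) • w (k - 1)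
            + (β * γ / (1 - β)) • g (k - 1)) :
    ∀ k : ℕ, 1 ≤ k →
      ‖y k - w k‖ ^ 2 ≤
        (β ^ 2 * η ^ 2 / (1 - β) ^ 3) *
          ∑ j ∈ Finset.Icc 1 (k - 1), β ^ (k - 1 - j) * ‖g j‖ ^ 2 := by
  intro k hk
  set n := k - 1
  have hβ : 0 < 1 - β := by linarith
  have hmomentum : ‖m n‖ ^ 2 ≤ 1 / (1 - β) * ∑ j ∈ Icc 1 n, β ^ (n - j) * ‖g j‖ ^ 2 := by
    rw [momentum_eq_sum β g m hm0 hm n]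
    refine (norm_sum_smul_sq_le _ (fun j _ => pow_nonneg hβ0 _) g).trans ?_
    gcongr
    exact geom_sum_Icc_reflect_le hβ0 hβ1 n
  rw [aux_sub_iterate_eq_neg_smul_momentum hβ1.ne g m w y hm0 hw hy1 hy hk, norm_neg, norm_smul, mul_pow,
    Real.norm_eq_abs, sq_abs]
  calc (β * η / (1 - β)) ^ 2 * ‖m n‖ ^ 2
      ≤ (β * η / (1 - β)) ^ 2 * (1 / (1 - β) * ∑ j ∈ Icc 1 n, β ^ (n - j) * ‖g j‖ ^ 2) := by
        gcongr
    _ = _ := by field_simp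

theorem aux_dist_bound (d : ℕ) (β γ η : ℝ)
    (hβ0 : 0 ≤ β) (hβ1 : β < 1) (hγ : 0 ≤ γ) (hη : 0 < η)
    (g m w y : ℕ → EuclideanSpace ℝ (Fin d))
    (hm0 : m 0 = 0)
    (hm : ∀ t : ℕ, 1 ≤ t → m t = β • m (t - 1) + g t)
    (hw : ∀ t : ℕ, 1 ≤ t → w (t + 1) = w t - γ • g t - η • m t)
    (hy1 : y 1 = w 1)
    (hy : ∀ k : ℕ, 2 ≤ k →
      y k = (1 / (1 - β)) • w k - (β / (1 - β)) • w (k - 1)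
            + (β * γ / (1 - β)) • g (k - 1)) :
    ∀ k : ℕ, 1 ≤ k →
      ‖y k - w k‖ ^ 2 ≤
        (β ^ 2 * η ^ 2 / (1 - β) ^ 3) *
          ∑ j ∈ Finset.Icc 1 (k - 1), β ^ (k - 1 - j) * ‖g j‖ ^ 2 :=
  aux_dist_bound_general d β γ η hβ0 hβ1 g m w y hm0 hm hw hy1 hy
end

section
/- Let β ∈ (0,1) and set δ = (1/β - 1)/2. For integers 1 ≤ k ≤ t-1, define C_{t,k} = (γ/2)β^{t-k} + (1+1/δ)(γ/2 + η) Σ_{l=k}^{t-1} β^{t-l}((1+δ)β²)^{l-k}, where γ ≥ 0 and η > 0. Then C_{t,k} ≤ ( γ/2 + (1+β)(γ+2η)/(1-β)² ) β^{t-k}. -/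
open Finset

/-!
Since `δ = (1 - β) / (2β)`, the ratio `(1 + δ) β²` equals `r β` with `r = (1 + β) / 2 < 1`, so the
`l`-th summand is `β ^ (t - k) * r ^ (l - k)` and the sum is at most `β ^ (t - k) / (1 - r)`.
With `1 + 1/δ = (1 + β) / (1 - β)` and `1 - r = (1 - β) / 2` this gives the constant
`(1 + β)(γ + 2η) / (1 - β)²`.
-/

section GeomSum

variable {K : Type*} [Field K] [LinearOrder K] [IsStrictOrderedRing K]

theorem sum_Icc_pow_tsub_le_inv {r : K} (hr0 : 0 ≤ r) (hr1 : r < 1) (k n : ℕ) :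
    ∑ l ∈ Icc k n, r ^ (l - k) ≤ (1 - r)⁻¹ := by
  rw [← Ico_add_one_right_eq_Icc, sum_Ico_eq_sum_range]
  simp only [add_tsub_cancel_left]
  have := geom_sum_Ico_le_of_lt_one (m := 0) (n := n + 1 - k) hr0 hr1
  rwa [← range_eq_Ico, pow_zero, one_div] at this

theorem pow_tsub_mul_mul_pow_tsub {M : Type*} [CommMonoid M] (β r : M) {k l t : ℕ}
    (hkl : k ≤ l) (hlt : l ≤ t) :
    β ^ (t - l) * (r * β) ^ (l - k) = β ^ (t - k) * r ^ (l - k) := by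
  rw [mul_pow, mul_left_comm, ← pow_add, tsub_add_tsub_cancel hlt hkl, mul_comm]

theorem sum_Icc_pow_tsub_mul_mul_pow_tsub_le {β r : K} (hβ : 0 ≤ β) (hr0 : 0 ≤ r) (hr1 : r < 1)
    {k n t : ℕ} (hnt : n ≤ t) :
    ∑ l ∈ Icc k n, β ^ (t - l) * (r * β) ^ (l - k) ≤ β ^ (t - k) * (1 - r)⁻¹ := by
  calc ∑ l ∈ Icc k n, β ^ (t - l) * (r * β) ^ (l - k)
      = β ^ (t - k) * ∑ l ∈ Icc k n, r ^ (l - k) := by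
        rw [mul_sum]
        refine sum_congr rfl fun l hl => ?_
        obtain ⟨hkl, hln⟩ := mem_Icc.mp hl
        exact pow_tsub_mul_mul_pow_tsub β r hkl (hln.trans hnt)
    _ ≤ β ^ (t - k) * (1 - r)⁻¹ := by
        gcongr
        exact sum_Icc_pow_tsub_le_inv hr0 hr1 k n

end GeomSum

theorem C_tk_bound_general (β γ η : ℝ) (hβ0 : 0 < β) (hβ1 : β < 1)
    (hγ : 0 ≤ γ) (hη : 0 < η) (t k : ℕ) :
    let δ : ℝ := (1 / β - 1) / 2
    (γ / 2) * β ^ (t - k) +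
      (1 + 1 / δ) * (γ / 2 + η) *
        ∑ l ∈ Finset.Icc k (t - 1), β ^ (t - l) * ((1 + δ) * β ^ 2) ^ (l - k)
    ≤ (γ / 2 + (1 + β) * (γ + 2 * η) / (1 - β) ^ 2) * β ^ (t - k) := by
  intro δ
  have h1β : 0 < 1 - β := sub_pos.mpr hβ1
  have hratio : (1 + δ) * β ^ 2 = (1 + β) / 2 * β := by
    simp only [δ]; field_simp; ring
  have hfactor : 1 + 1 / δ = (1 + β) / (1 - β) := by
    simp only [δ]; field_simp; ring
  rw [hratio, hfactor]
  calc γ / 2 * β ^ (t - k) + (1 + β) / (1 - β) * (γ / 2 + η) *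
        ∑ l ∈ Icc k (t - 1), β ^ (t - l) * ((1 + β) / 2 * β) ^ (l - k)
      ≤ γ / 2 * β ^ (t - k) + (1 + β) / (1 - β) * (γ / 2 + η) *
        (β ^ (t - k) * (1 - (1 + β) / 2)⁻¹) := by
        gcongr
        exact sum_Icc_pow_tsub_mul_mul_pow_tsub_le hβ0.le (by positivity) (by linarith)
          (Nat.sub_le t 1)
    _ = (γ / 2 + (1 + β) * (γ + 2 * η) / (1 - β) ^ 2) * β ^ (t - k) := by
        have hone_sub : 1 - (1 + β) / 2 = (1 - β) / 2 := by ring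
        rw [hone_sub]
        field_simp

theorem C_tk_bound (β γ η : ℝ) (hβ0 : 0 < β) (hβ1 : β < 1)
    (hγ : 0 ≤ γ) (hη : 0 < η) (t k : ℕ) (hk : 1 ≤ k) (hkt : k ≤ t - 1) (ht : 2 ≤ t) :
    let δ : ℝ := (1 / β - 1) / 2
    (γ / 2) * β ^ (t - k) +
      (1 + 1 / δ) * (γ / 2 + η) *
        ∑ l ∈ Finset.Icc k (t - 1), β ^ (t - l) * ((1 + δ) * β ^ 2) ^ (l - k)
    ≤ (γ / 2 + (1 + β) * (γ + 2 * η) / (1 - β) ^ 2) * β ^ (t - k) :=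
  C_tk_bound_general β γ η hβ0 hβ1 hγ hη t k
end
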